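/- Let f_1(x) = max{sin x^1 + sin x^2, 0} + min{-x^1 - x^2, x^1} on ℝ^2 and M = {x : f_1(x) = 0}. Then every v in the open positive quadrant K = {v : v^1 > 0, v^2 > 0} satisfies f_1'(0,v) = 0, yet K ∩ T_M(0) = ∅; in particular T_M(0) ≠ {v : f_1'(0,v) = 0}. -/

import Mathlib

open Filter

/-- `f : ℝ² → ℝ` has one-sided directional derivative `d` at `x` in direction `v`. -/
def HasDirDeriv (f : ℝ × ℝ → ℝ) (x v : ℝ × ℝ) (d : ℝ) : Prop :=
  Tendsto (fun α : ℝ => (f (x + α • v) - f x) / α) (nhdsWithin 0 (Set.Ioi 0)) (nhds d)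

/-- The contingent (Bouligand tangent) cone to `M ⊆ ℝ²` at `x`. -/
def contingentCone (M : Set (ℝ × ℝ)) (x : ℝ × ℝ) : Set (ℝ × ℝ) :=
  {v | ∃ (α : ℕ → ℝ) (u : ℕ → ℝ × ℝ),
    (∀ k, 0 < α k) ∧ Tendsto α atTop (nhds 0) ∧ Tendsto u atTop (nhds v) ∧
    ∀ k, x + α k • u k ∈ M}

lemma f1_eq (a b : ℝ) (ha : 0 < a) (ha' : a < Real.pi) (hb : 0 < b) (hb' : b < Real.pi) :
    max (Real.sin a + Real.sin b) 0 + min (-a - b) a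
      = Real.sin a + Real.sin b - a - b := by
  have hsa := Real.sin_pos_of_pos_of_lt_pi ha ha'
  have hsb := Real.sin_pos_of_pos_of_lt_pi hb hb'
  rw [max_eq_left (by linarith), min_eq_left (by linarith)]
  ring

lemma dirDerivAux (v : ℝ × ℝ) (h1 : 0 < v.1) (h2 : 0 < v.2) :
    HasDirDeriv
      (fun x => max (Real.sin x.1 + Real.sin x.2) 0 + min (-x.1 - x.2) x.1) 0 v 0 := by
  set g : ℝ → ℝ := fun α => Real.sin (α * v.1) + Real.sin (α * v.2) - α * v.1 - α * v.2
    with hg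
  have hd : HasDerivAt g 0 0 := by
    have c1 : HasDerivAt (fun α : ℝ => α * v.1) v.1 0 := by
      simpa using (hasDerivAt_id (0:ℝ)).mul_const v.1
    have c2 : HasDerivAt (fun α : ℝ => α * v.2) v.2 0 := by
      simpa using (hasDerivAt_id (0:ℝ)).mul_const v.2
    have s1 : HasDerivAt (fun α : ℝ => Real.sin (α * v.1)) v.1 0 := by
      have := (Real.hasDerivAt_sin ((0:ℝ) * v.1)).comp 0 c1
      simpa [Function.comp_def] using this
    have s2 : HasDerivAt (fun α : ℝ => Real.sin (α * v.2)) v.2 0 := by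
      have := (Real.hasDerivAt_sin ((0:ℝ) * v.2)).comp 0 c2
      simpa [Function.comp_def] using this
    have := ((s1.add s2).sub c1).sub c2
    simpa [hg, Pi.add_def, Pi.sub_def] using this
  have htend : Tendsto (fun α : ℝ => g α / α) (nhdsWithin 0 (Set.Ioi 0)) (nhds 0) := by
    have := (hasDerivAt_iff_tendsto_slope.mp hd).mono_left
      (nhdsWithin_mono 0 (fun x hx => ne_of_gt hx))
    refine this.congr' ?_
    filter_upwards [self_mem_nhdsWithin] with α (hα : (0:ℝ) < α)
    simp [slope_def_field, hg, div_eq_inv_mul]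
  unfold HasDirDeriv
  refine htend.congr' ?_
  have hmem : Set.Ioo (0:ℝ) (min (Real.pi / v.1) (Real.pi / v.2)) ∈
      nhdsWithin (0:ℝ) (Set.Ioi 0) := by
    apply Ioo_mem_nhdsGT_of_mem
    constructor
    · rfl
    · exact lt_min (div_pos Real.pi_pos h1) (div_pos Real.pi_pos h2)
  filter_upwards [hmem] with α hα
  obtain ⟨hα0, hαm⟩ := hα
  have hav1 : α * v.1 < Real.pi := by
    have := lt_of_lt_of_le hαm (min_le_left _ _)
    calc α * v.1 < (Real.pi / v.1) * v.1 := by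
          exact mul_lt_mul_of_pos_right this h1
      _ = Real.pi := by field_simp
  have hav2 : α * v.2 < Real.pi := by
    have := lt_of_lt_of_le hαm (min_le_right _ _)
    calc α * v.2 < (Real.pi / v.2) * v.2 := by
          exact mul_lt_mul_of_pos_right this h2
      _ = Real.pi := by field_simp
  have key := f1_eq (α * v.1) (α * v.2) (mul_pos hα0 h1) hav1 (mul_pos hα0 h2) hav2
  simp only [Prod.fst_add, Prod.snd_add, Prod.fst_zero, Prod.snd_zero, Prod.smul_fst,
    Prod.smul_snd, smul_eq_mul, zero_add, Real.sin_zero, mul_zero, neg_zero]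
  rw [key]
  simp [hg]

lemma quadrant_disjoint :
    ({v : ℝ × ℝ | 0 < v.1 ∧ 0 < v.2} ∩
      contingentCone
        {x : ℝ × ℝ | max (Real.sin x.1 + Real.sin x.2) 0 + min (-x.1 - x.2) x.1 = 0} 0
      = ∅) := by
  ext v
  simp only [Set.mem_inter_iff, Set.mem_setOf_eq, Set.mem_empty_iff_false, iff_false]
  rintro ⟨⟨h1, h2⟩, α, u, hpos, hα, hu, hM⟩
  have hu1 : Tendsto (fun k => (u k).1) atTop (nhds v.1) := (continuous_fst.tendsto v).comp hu
  have hu2 : Tendsto (fun k => (u k).2) atTop (nhds v.2) := (continuous_snd.tendsto v).comp hu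
  have hp1 : Tendsto (fun k => α k * (u k).1) atTop (nhds 0) := by
    simpa using hα.mul hu1
  have hp2 : Tendsto (fun k => α k * (u k).2) atTop (nhds 0) := by
    simpa using hα.mul hu2
  have e1 : ∀ᶠ k in atTop, 0 < (u k).1 := hu1.eventually (eventually_gt_nhds h1)
  have e2 : ∀ᶠ k in atTop, 0 < (u k).2 := hu2.eventually (eventually_gt_nhds h2)
  have e3 : ∀ᶠ k in atTop, α k * (u k).1 < Real.pi :=
    hp1.eventually (eventually_lt_nhds Real.pi_pos)
  have e4 : ∀ᶠ k in atTop, α k * (u k).2 < Real.pi :=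
    hp2.eventually (eventually_lt_nhds Real.pi_pos)
  obtain ⟨k, ⟨⟨hk1, hk2⟩, hk3⟩, hk4⟩ := (((e1.and e2).and e3).and e4).exists
  have hMk := hM k
  have hpk := hpos k
  have ha : 0 < α k * (u k).1 := mul_pos hpk hk1
  have hb : 0 < α k * (u k).2 := mul_pos hpk hk2
  have key := f1_eq (α k * (u k).1) (α k * (u k).2) ha hk3 hb hk4
  simp only [Set.mem_setOf_eq, Prod.fst_add, Prod.snd_add, Prod.fst_zero, Prod.snd_zero,
    Prod.smul_fst, Prod.smul_snd, smul_eq_mul, zero_add] at hMk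
  rw [key] at hMk
  have s1 := Real.sin_lt ha
  have s2 := Real.sin_lt hb
  linarith

/-- For `f₁(x) = max{sin x¹ + sin x² , 0} + min{-x¹ - x², x¹}` and
`M = {f₁ = 0}`: every `v` in the open positive quadrant `K` satisfies
`f₁'(0,v) = 0`, yet `K ∩ T_M(0) = ∅`; in particular
`T_M(0) ≠ {v : f₁'(0,v) = 0}`. -/
theorem contingentCone_ne_kernel_dirDeriv :
    (∀ v : ℝ × ℝ, 0 < v.1 → 0 < v.2 →
      HasDirDeriv
        (fun x => max (Real.sin x.1 + Real.sin x.2) 0 + min (-x.1 - x.2) x.1) 0 v 0) ∧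
    ({v : ℝ × ℝ | 0 < v.1 ∧ 0 < v.2} ∩
      contingentCone
        {x : ℝ × ℝ | max (Real.sin x.1 + Real.sin x.2) 0 + min (-x.1 - x.2) x.1 = 0} 0
      = ∅) ∧
    contingentCone
        {x : ℝ × ℝ | max (Real.sin x.1 + Real.sin x.2) 0 + min (-x.1 - x.2) x.1 = 0} 0
      ≠ {v : ℝ × ℝ |
          HasDirDeriv
            (fun x => max (Real.sin x.1 + Real.sin x.2) 0 + min (-x.1 - x.2) x.1)
            0 v 0} := by
  refine ⟨dirDerivAux, quadrant_disjoint, ?_⟩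
  intro h
  have hv : ((1:ℝ), (1:ℝ)) ∈ {v : ℝ × ℝ |
      HasDirDeriv
        (fun x => max (Real.sin x.1 + Real.sin x.2) 0 + min (-x.1 - x.2) x.1) 0 v 0} :=
    dirDerivAux (1, 1) one_pos one_pos
  rw [← h] at hv
  have : ((1:ℝ), (1:ℝ)) ∈ ({v : ℝ × ℝ | 0 < v.1 ∧ 0 < v.2} ∩
      contingentCone
        {x : ℝ × ℝ | max (Real.sin x.1 + Real.sin x.2) 0 + min (-x.1 - x.2) x.1 = 0} 0) :=
    ⟨⟨one_pos, one_pos⟩, hv⟩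
  rw [quadrant_disjoint] at this
  exact this
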